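/- Let E : X → ℝ be a uniformly smooth convex function on the bounded level set D_E = {x : E(x) ≤ E(0)} of a Banach space X, with modulus ρ(u) := ρ(E,D_E,u), and let (t_m) ⊆ [0,1] be a weakness sequence. For θ ∈ (0,θ₀], let ξ_m(ρ,τ,θ) be the unique solution of ρ(u) = θ t_m u. If Σ_{m=1}^∞ t_m ξ_m(ρ,τ,θ) = ∞ for all θ ∈ (0,θ₀], then for any algorithm in the class WBGA(co), lim_{m→∞} E(G_m) = inf_{x∈D_E} E(x). -/

import Mathlib

/-!
The values `E (G m)` decrease (take `λ = 0` in the reduction step), and `E` is bounded below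
because its sublevel set `D_E` is bounded, so `E (G m)` converges to the infimum of its values.
If that infimum `b` exceeded `E f` for some `f ∈ D_E`, convexity and biorthogonality would give
`-E'(G m) f ≥ b - E f > 0` for every `m`. Since `ρ(1/θ₀) > 0` bounds `E'` uniformly on `D_E`,
approximating `f` from the span of the symmetric dictionary turns this into a uniform bound
`sup_{g ∈ D} -E'(G m) g ≥ δ > 0`. The smoothness inequality
`E (x + ξ g) ≤ E x + ξ E'(x) g + 2 ρ(ξ)` at `ξ = ξ_m(θ)`, `θ ≤ δ / 4`, then makes the `m`-th step
decrease `E` by at least `(δ - 2θ) t_m ξ_m`, and the divergence of `∑ t_m ξ_m` contradicts the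
lower bound on `E`.
-/

open Set Filter

/-- The modulus of smoothness of a function `E` on a set `S`. -/
noncomputable def modS {X : Type*} [NormedAddCommGroup X] [NormedSpace ℝ X]
    (E : X → ℝ) (S : Set X) (u : ℝ) : ℝ :=
  (1 / 2) * sSup ((fun p : X × X => |E (p.1 + u • p.2) + E (p.1 - u • p.2) - 2 * E p.1|)
    '' {p : X × X | p.1 ∈ S ∧ ‖p.2‖ = 1})

section Smoothness

variable {X : Type*} [NormedAddCommGroup X] [NormedSpace ℝ X] {E : X → ℝ}

def secondDiff (E : X → ℝ) (x v : X) : ℝ := E (x + v) + E (x - v) - 2 * E x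

theorem modS_eq (E : X → ℝ) (S : Set X) (u : ℝ) : modS E S u =
    1 / 2 * sSup ((fun p : X × X => |secondDiff E p.1 (u • p.2)|) '' {p | p.1 ∈ S ∧ ‖p.2‖ = 1}) :=
  rfl

theorem modS_nonneg (E : X → ℝ) (S : Set X) (u : ℝ) : 0 ≤ modS E S u :=
  mul_nonneg (by norm_num) (Real.sSup_nonneg (by rintro _ ⟨p, -, rfl⟩; exact abs_nonneg _))

theorem bddAbove_of_modS_pos {S : Set X} {u : ℝ} (h : 0 < modS E S u) :
    BddAbove ((fun p : X × X => |secondDiff E p.1 (u • p.2)|) '' {p | p.1 ∈ S ∧ ‖p.2‖ = 1}) := by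
  by_contra hb
  rw [modS_eq, Real.sSup_of_not_bddAbove hb, mul_zero] at h
  exact h.false

namespace ConvexOn

theorem add_le_of_hasFDerivAt (hE : ConvexOn ℝ univ E) {x : X} {E'x : X →L[ℝ] ℝ}
    (hx : HasFDerivAt E E'x x) (z : X) : E x + E'x (z - x) ≤ E z := by
  let g : ℝ →ᵃ[ℝ] X := AffineMap.lineMap x z
  have hd : HasDerivAt (E ∘ g) (E'x (z - x)) 0 := by
    have hg0 : g 0 = x := AffineMap.lineMap_apply_zero x z
    exact (hg0 ▸ hx).comp_hasDerivAt (0 : ℝ) AffineMap.hasDerivAt_lineMap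
  have := (hE.comp_affineMap g).le_slope_of_hasDerivAt (mem_univ 0) (mem_univ 1) one_pos hd
  simp only [slope, Function.comp_apply, g, AffineMap.lineMap_apply_one,
    AffineMap.lineMap_apply_zero, sub_zero, inv_one, vsub_eq_sub, one_smul] at this
  linarith

theorem secondDiff_nonneg (hE : ConvexOn ℝ univ E) (x v : X) : 0 ≤ secondDiff E x v := by
  have h := hE.2 (mem_univ (x + v)) (mem_univ (x - v)) (by norm_num : (0 : ℝ) ≤ 1 / 2)
    (by norm_num : (0 : ℝ) ≤ 1 / 2) (by norm_num)
  rw [show (1 / 2 : ℝ) • (x + v) + (1 / 2 : ℝ) • (x - v) = x by module] at h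
  simp only [smul_eq_mul] at h
  unfold secondDiff
  linarith

theorem secondDiff_smul_le (hE : ConvexOn ℝ univ E) (x v : X) {a : ℝ} (ha₀ : 0 ≤ a) (ha₁ : a ≤ 1) :
    secondDiff E x (a • v) ≤ secondDiff E x v := by
  have hadd := hE.2 (mem_univ (x + v)) (mem_univ x) ha₀ (sub_nonneg.2 ha₁) (by ring)
  have hsub := hE.2 (mem_univ (x - v)) (mem_univ x) ha₀ (sub_nonneg.2 ha₁) (by ring)
  rw [show a • (x + v) + (1 - a) • x = x + a • v by module] at hadd
  rw [show a • (x - v) + (1 - a) • x = x - a • v by module] at hsub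
  simp only [smul_eq_mul] at hadd hsub
  have := mul_le_of_le_one_left (hE.secondDiff_nonneg x v) ha₁
  unfold secondDiff at *
  linarith

theorem secondDiff_le_modS (hE : ConvexOn ℝ univ E) {S : Set X} {x : X} (hx : x ∈ S) {u : ℝ}
    (hρ : 0 < modS E S u) {v : X} (hv : ‖v‖ ≤ u) : secondDiff E x v ≤ 2 * modS E S u := by
  rcases eq_or_ne v 0 with rfl | hv₀
  · simp only [secondDiff, add_zero, sub_zero]
    linarith [modS_nonneg E S u]
  have hv₀' : 0 < ‖v‖ := norm_pos_iff.2 hv₀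
  have hu : 0 < u := hv₀'.trans_le hv
  set y : X := ‖v‖⁻¹ • v
  have hy : ‖y‖ = 1 := by simp [y, norm_smul, hv₀'.ne']
  have hvy : (‖v‖ / u) • (u • y) = v := by
    simp only [y, smul_smul]
    field_simp
    simp
  have hmono := hE.secondDiff_smul_le x (u • y) (div_nonneg hv₀'.le hu.le) ((div_le_one hu).2 hv)
  rw [hvy] at hmono
  have hsup : |secondDiff E x (u • y)| ≤ _ :=
    le_csSup (bddAbove_of_modS_pos hρ) ⟨(x, y), ⟨hx, hy⟩, rfl⟩
  rw [abs_of_nonneg (hE.secondDiff_nonneg _ _)] at hsup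
  rw [modS_eq]
  linarith

theorem le_add_fderiv_add_modS (hE : ConvexOn ℝ univ E) {S : Set X} {x : X} {E'x : X →L[ℝ] ℝ}
    (hx : HasFDerivAt E E'x x) (hxS : x ∈ S) {u : ℝ} (hρ : 0 < modS E S u) {v : X} (hv : ‖v‖ ≤ u) :
    E (x + v) ≤ E x + E'x v + 2 * modS E S u := by
  have hgrad := hE.add_le_of_hasFDerivAt hx (x - v)
  have hsd := hE.secondDiff_le_modS hxS hρ hv
  rw [sub_sub_cancel_left, map_neg] at hgrad
  unfold secondDiff at hsd
  linarith

theorem norm_fderiv_le (hE : ConvexOn ℝ univ E) {S : Set X} {x : X} {E'x : X →L[ℝ] ℝ}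
    (hx : HasFDerivAt E E'x x) (hxS : x ∈ S) {u : ℝ} (hu : 0 < u) (hρ : 0 < modS E S u) {B : ℝ}
    (hB : ∀ y, B ≤ E y) {c : ℝ} (hxc : E x ≤ c) : ‖E'x‖ ≤ (2 * modS E S u + c - B) / u := by
  have hbound : ∀ v, ‖v‖ ≤ u → E'x v ≤ 2 * modS E S u + c - B := fun v hv => by
    have hgrad := hE.add_le_of_hasFDerivAt hx (x + v)
    have hsd := hE.secondDiff_le_modS hxS hρ hv
    rw [add_sub_cancel_left] at hgrad
    unfold secondDiff at hsd
    linarith [hB (x - v)]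
  refine ContinuousLinearMap.opNorm_bound_of_ball_bound hu _ E'x fun v hv => ?_
  rw [mem_closedBall_zero_iff] at hv
  have hneg := hbound (-v) (by rwa [norm_neg])
  rw [map_neg] at hneg
  rw [Real.norm_eq_abs, abs_le]
  constructor <;> linarith [hbound v hv]

theorem bddBelow_range_of_isBounded_sublevel (hE : ConvexOn ℝ univ E) {x₀ : X} {E'x₀ : X →L[ℝ] ℝ}
    (hx₀ : HasFDerivAt E E'x₀ x₀) (hbdd : Bornology.IsBounded {x | E x ≤ E x₀}) :
    BddBelow (range E) := by
  obtain ⟨R, hR⟩ := hbdd.subset_closedBall x₀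
  have hR₀ : 0 ≤ R := by simpa using hR (le_refl (E x₀))
  refine ⟨E x₀ - ‖E'x₀‖ * R, ?_⟩
  rintro _ ⟨x, rfl⟩
  by_cases hx : E x ≤ E x₀
  · have hgrad := hE.add_le_of_hasFDerivAt hx₀ x
    have hdist : ‖x - x₀‖ ≤ R := by simpa [dist_eq_norm] using hR hx
    have := (E'x₀.le_opNorm (x - x₀)).trans (mul_le_mul_of_nonneg_left hdist (norm_nonneg _))
    linarith [neg_abs_le (E'x₀ (x - x₀)), Real.norm_eq_abs (E'x₀ (x - x₀))]
  · linarith [mul_nonneg (norm_nonneg E'x₀) hR₀]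

theorem sub_le_neg_fderiv_apply (hE : ConvexOn ℝ univ E) {x : X} {E'x : X →L[ℝ] ℝ}
    (hx : HasFDerivAt E E'x x) (hxx : E'x x = 0) (z : X) : E x - E z ≤ (-E'x) z := by
  have hgrad := hE.add_le_of_hasFDerivAt hx z
  rw [map_sub, hxx] at hgrad
  rw [neg_apply]
  linarith

theorem le_sub_of_greedy_step (hE : ConvexOn ℝ univ E) {S : Set X} {x y φ : X} {E'x : X →L[ℝ] ℝ}
    (hx : HasFDerivAt E E'x x) (hxS : x ∈ S) (hφ : ‖φ‖ ≤ 1) {ξ θ t δ : ℝ} (hξ : 0 < ξ)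
    (hθ : 0 < θ) (ht : 0 ≤ t) (hρ : modS E S ξ = θ * t * ξ) (hgreedy : t * δ ≤ (-E'x) φ)
    (hy : ∀ lam : ℝ, 0 ≤ lam → E y ≤ E (x + lam • φ)) :
    E y ≤ E x - (δ - 2 * θ) * (t * ξ) := by
  rcases ht.eq_or_lt with rfl | htpos
  · simpa using hy 0 le_rfl
  have hξφ : ‖ξ • φ‖ ≤ ξ := by
    rw [norm_smul, Real.norm_of_nonneg hξ.le]
    exact mul_le_of_le_one_right hξ.le hφ
  have hbound := hE.le_add_fderiv_add_modS hx hxS (hρ ▸ by positivity) hξφ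
  rw [map_smul, smul_eq_mul, hρ] at hbound
  rw [neg_apply] at hgreedy
  nlinarith [hy ξ hξ.le, mul_le_mul_of_nonneg_left hgreedy hξ.le]

end ConvexOn

theorem le_add_smul_of_le_sInf (hB : BddBelow (range E)) {x y φ : X}
    (hy : E y ≤ sInf ((fun lam : ℝ => E (x + lam • φ)) '' Ici 0)) {lam : ℝ} (hlam : 0 ≤ lam) :
    E y ≤ E (x + lam • φ) :=
  hy.trans (csInf_le (hB.mono (by rintro _ ⟨l, -, rfl⟩; exact ⟨_, rfl⟩)) ⟨lam, hlam, rfl⟩)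

end Smoothness

theorem Submodule.exists_abs_le_mul_of_mem_span {M : Type*} [AddCommGroup M] [Module ℝ M]
    {D : Set M} (hD : ∀ g ∈ D, -g ∈ D) {f : M} (hf : f ∈ Submodule.span ℝ D) :
    ∃ A, 0 ≤ A ∧ ∀ (ψ : M →ₗ[ℝ] ℝ) (s : ℝ), (∀ g ∈ D, ψ g ≤ s) → |ψ f| ≤ A * s := by
  induction hf using Submodule.span_induction with
  | mem g hg =>
    refine ⟨1, zero_le_one, fun ψ s hs => ?_⟩
    have hneg := hs (-g) (hD g hg)
    rw [map_neg] at hneg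
    rw [one_mul, abs_le]
    constructor <;> linarith [hs g hg]
  | zero => exact ⟨0, le_rfl, fun ψ s _ => by simp⟩
  | add x y _ _ hx hy =>
    obtain ⟨A, hA, hxA⟩ := hx
    obtain ⟨B, hB, hyB⟩ := hy
    refine ⟨A + B, add_nonneg hA hB, fun ψ s hs => ?_⟩
    rw [map_add, add_mul]
    exact (abs_add_le _ _).trans (add_le_add (hxA ψ s hs) (hyB ψ s hs))
  | smul c x _ hx =>
    obtain ⟨A, hA, hxA⟩ := hx
    refine ⟨|c| * A, mul_nonneg (abs_nonneg c) hA, fun ψ s hs => ?_⟩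
    rw [map_smul, smul_eq_mul, abs_mul, mul_assoc]
    exact mul_le_mul_of_nonneg_left (hxA ψ s hs) (abs_nonneg c)

theorem exists_pos_forall_le_sSup_image {X ι : Type*} [NormedAddCommGroup X] [NormedSpace ℝ X]
    {D : Set X} (hDnorm : ∀ g ∈ D, ‖g‖ ≤ 1) (hDdense : Dense (Submodule.span ℝ D : Set X))
    (hDsymm : ∀ g ∈ D, -g ∈ D) {ψ : ι → X →L[ℝ] ℝ} {M η : ℝ} {f : X}
    (hψ : ∀ i, ‖ψ i‖ ≤ M) (hη : 0 < η) (hf : ∀ i, η ≤ ψ i f) :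
    ∃ δ > 0, ∀ i, δ ≤ sSup (ψ i '' D) := by
  obtain ⟨f', hf'span, hff'⟩ := hDdense.exists_dist_lt f (ε := η / (2 * (|M| + 1))) (by positivity)
  have hf' : ∀ i, η / 2 < ψ i f' := fun i => by
    have happrox : |ψ i (f - f')| < η / 2 := calc
      |ψ i (f - f')| ≤ M * ‖f - f'‖ :=
        ((ψ i).le_opNorm _).trans (mul_le_mul_of_nonneg_right (hψ i) (norm_nonneg _))
      _ ≤ (|M| + 1) * ‖f - f'‖ := by gcongr; linarith [le_abs_self M]
      _ < (|M| + 1) * (η / (2 * (|M| + 1))) := by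
        rw [← dist_eq_norm]; gcongr
      _ = η / 2 := by field_simp
    rw [map_sub] at happrox
    linarith [(abs_lt.1 happrox).2, hf i]
  obtain ⟨A, hA, hAf'⟩ := Submodule.exists_abs_le_mul_of_mem_span hDsymm hf'span
  have hbdd : ∀ i, BddAbove (ψ i '' D) := fun i => ⟨M, by
    rintro _ ⟨g, hg, rfl⟩
    calc ψ i g ≤ ‖ψ i‖ * ‖g‖ := le_of_abs_le ((ψ i).le_opNorm g)
      _ ≤ M * 1 := mul_le_mul (hψ i) (hDnorm g hg) (norm_nonneg _) ((norm_nonneg _).trans (hψ i))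
      _ = M := mul_one M⟩
  have hAS : ∀ i, η / 2 < A * sSup (ψ i '' D) := fun i =>
    ((hf' i).trans_le (le_abs_self _)).trans_le
      (hAf' (ψ i) _ fun g hg => le_csSup (hbdd i) ⟨g, hg, rfl⟩)
  refine ⟨η / (2 * (A + 1)), by positivity, fun i => ?_⟩
  rw [div_le_iff₀ (by positivity)]
  nlinarith [hAS i]

theorem not_bddBelow_of_le_sub_mul_sum {a b : ℕ → ℝ} {c : ℝ} (hc : 0 < c)
    (hstep : ∀ m, a (m + 1) ≤ a m - c * b (m + 1))
    (hb : Tendsto (fun N => ∑ m ∈ Finset.Icc 1 N, b m) atTop atTop) : ¬BddBelow (range a) := by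
  have hle : ∀ N, a N ≤ a 0 - c * ∑ m ∈ Finset.Icc 1 N, b m := by
    intro N
    induction N with
    | zero => simp
    | succ n ih =>
      rw [Finset.sum_Icc_succ_top (Nat.le_add_left 1 n), mul_add]
      linarith [hstep n]
  refine not_bddBelow_of_tendsto_atBot (l := atTop) (tendsto_atBot_mono hle ?_)
  exact tendsto_atBot_add_const_left _ _ (tendsto_neg_atTop_atBot.comp (hb.const_mul_atTop hc))

theorem stmt_13_general {X : Type*} [NormedAddCommGroup X] [NormedSpace ℝ X]
    (E : X → ℝ) (hE : ConvexOn ℝ Set.univ E)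
    (E' : X → (X →L[ℝ] ℝ)) (hdiff : ∀ x, HasFDerivAt E (E' x) x)
    (Dic : Set X) (hDnorm : ∀ g ∈ Dic, ‖g‖ ≤ 1)
    (hDdense : Dense (Submodule.span ℝ Dic : Set X))
    (hDsymm : ∀ g ∈ Dic, -g ∈ Dic)
    (DE : Set X) (hDE : DE = {x : X | E x ≤ E 0}) (hbdd : Bornology.IsBounded DE)
    (θ₀ : ℝ) (hθ₀ : θ₀ ∈ Set.Ioc (0 : ℝ) 1) (hρθ₀ : 1 ≤ modS E DE (1 / θ₀))
    (t : ℕ → ℝ) (ht : ∀ m, t m ∈ Set.Icc (0 : ℝ) 1)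
    -- ξ θ m is the unique positive solution of ρ(u) = θ t_m u
    (ξ : ℝ → ℕ → ℝ)
    (hξ : ∀ θ ∈ Set.Ioc (0 : ℝ) θ₀, ∀ m : ℕ,
      0 < ξ θ m ∧ ξ θ m ≤ 1 / θ₀ ∧ modS E DE (ξ θ m) = θ * t m * ξ θ m)
    (hdiv : ∀ θ ∈ Set.Ioc (0 : ℝ) θ₀,
      Filter.Tendsto (fun N => ∑ m ∈ Finset.Icc 1 N, t m * ξ θ m)
        Filter.atTop Filter.atTop)
    (G φ : ℕ → X) (hG0 : G 0 = 0) (hφD : ∀ m, 1 ≤ m → φ m ∈ Dic)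
    (hgreedy : ∀ m : ℕ, 1 ≤ m →
      (-(E' (G (m - 1)))) (φ m) ≥ t m * sSup ((fun g => (-(E' (G (m - 1)))) g) '' Dic))
    (hreduction : ∀ m : ℕ, 1 ≤ m →
      E (G m) ≤ sInf ((fun lam => E (G (m - 1) + lam • φ m)) '' Set.Ici (0 : ℝ)))
    (hbio : ∀ m : ℕ, 1 ≤ m → E' (G m) (G m) = 0) :
    Filter.Tendsto (fun m => E (G m)) Filter.atTop (nhds (sInf (E '' DE))) := by
  have hB := hE.bddBelow_range_of_isBounded_sublevel (hdiff 0) (hDE ▸ hbdd)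
  have hred (m : ℕ) {lam : ℝ} (hlam : 0 ≤ lam) : E (G (m + 1)) ≤ E (G m + lam • φ (m + 1)) :=
    le_add_smul_of_le_sInf hB (hreduction (m + 1) m.succ_pos) hlam
  have hanti : Antitone (fun m => E (G m)) :=
    antitone_nat_of_succ_le fun m => by simpa using hred m le_rfl
  have hGE0 (m : ℕ) : E (G m) ≤ E 0 := hG0 ▸ hanti m.zero_le
  have hGDE (m : ℕ) : G m ∈ DE := hDE ▸ hGE0 m
  refine tendsto_atTop_isGLB hanti ⟨?_, fun b hb => ?_⟩
  · rintro _ ⟨m, rfl⟩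
    exact csInf_le (hB.mono (image_subset_range E DE)) ⟨G m, hGDE m, rfl⟩
  by_contra! hlt
  obtain ⟨_, ⟨f, -, rfl⟩, hfb⟩ := exists_lt_of_csInf_lt (.image E ⟨0, by simp [hDE]⟩) hlt
  have hbio₀ (m : ℕ) : E' (G m) (G m) = 0 :=
    m.eq_zero_or_pos.elim (fun hm => by simp [hm, hG0]) (hbio m)
  have hψf (m : ℕ) : b - E f ≤ (-E' (G m)) f :=
    (sub_le_sub_right (hb ⟨m, rfl⟩) _).trans (hE.sub_le_neg_fderiv_apply (hdiff _) (hbio₀ m) f)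
  obtain ⟨hθ₀pos, -⟩ := hθ₀
  obtain ⟨B, hB⟩ := hB
  have hM (m : ℕ) : ‖-E' (G m)‖ ≤ (2 * modS E DE (1 / θ₀) + E 0 - B) / (1 / θ₀) :=
    (norm_neg _).trans_le <| hE.norm_fderiv_le (hdiff _) (hGDE m) (by positivity)
      (by linarith) (fun x => hB ⟨x, rfl⟩) (hGE0 m)
  obtain ⟨δ, hδ, hδS⟩ :=
    exists_pos_forall_le_sSup_image hDnorm hDdense hDsymm hM (sub_pos.2 hfb) hψf
  set θ := min θ₀ (δ / 4)
  have hθ : θ ∈ Ioc 0 θ₀ := ⟨lt_min hθ₀pos (by positivity), min_le_left _ _⟩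
  refine not_bddBelow_of_le_sub_mul_sum (c := δ - 2 * θ) (by linarith [min_le_right θ₀ (δ / 4)])
    (fun m => ?_) (hdiv θ hθ) ⟨b, hb⟩
  obtain ⟨hξpos, -, hξρ⟩ := hξ θ hθ (m + 1)
  exact hE.le_sub_of_greedy_step (hdiff _) (hGDE m) (hDnorm _ (hφD _ m.succ_pos)) hξpos hθ.1
    (ht _).1 hξρ ((mul_le_mul_of_nonneg_left (hδS m) (ht _).1).trans (hgreedy _ m.succ_pos))
    (fun _ => hred m)

/-- Convergence theorem for the class WBGA(co): if for every `θ ∈ (0,θ₀]` the series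
`∑ t_m ξ_m(ρ,τ,θ)` diverges, where `ξ_m` solves `ρ(u) = θ t_m u`, then
`E(G_m) → inf_{x ∈ D_E} E(x)`. -/
theorem stmt_13 {X : Type*} [NormedAddCommGroup X] [NormedSpace ℝ X] [CompleteSpace X]
    (E : X → ℝ) (hE : ConvexOn ℝ Set.univ E)
    (E' : X → (X →L[ℝ] ℝ)) (hdiff : ∀ x, HasFDerivAt E (E' x) x)
    (Dic : Set X) (hDnorm : ∀ g ∈ Dic, ‖g‖ ≤ 1)
    (hDdense : Dense (Submodule.span ℝ Dic : Set X))
    (hDsymm : ∀ g ∈ Dic, -g ∈ Dic)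
    (DE : Set X) (hDE : DE = {x : X | E x ≤ E 0}) (hbdd : Bornology.IsBounded DE)
    -- uniform smoothness of E on DE
    (husmooth : Filter.Tendsto (fun u => modS E DE u / u)
      (nhdsWithin 0 (Set.Ioi 0)) (nhds 0))
    (θ₀ : ℝ) (hθ₀ : θ₀ ∈ Set.Ioc (0 : ℝ) 1) (hρθ₀ : 1 ≤ modS E DE (1 / θ₀))
    (t : ℕ → ℝ) (ht : ∀ m, t m ∈ Set.Icc (0 : ℝ) 1)
    -- ξ θ m is the unique positive solution of ρ(u) = θ t_m u
    (ξ : ℝ → ℕ → ℝ)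
    (hξ : ∀ θ ∈ Set.Ioc (0 : ℝ) θ₀, ∀ m : ℕ,
      0 < ξ θ m ∧ ξ θ m ≤ 1 / θ₀ ∧ modS E DE (ξ θ m) = θ * t m * ξ θ m)
    (hdiv : ∀ θ ∈ Set.Ioc (0 : ℝ) θ₀,
      Filter.Tendsto (fun N => ∑ m ∈ Finset.Icc 1 N, t m * ξ θ m)
        Filter.atTop Filter.atTop)
    (G φ : ℕ → X) (hG0 : G 0 = 0) (hφD : ∀ m, 1 ≤ m → φ m ∈ Dic)
    (hgreedy : ∀ m : ℕ, 1 ≤ m →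
      (-(E' (G (m - 1)))) (φ m) ≥ t m * sSup ((fun g => (-(E' (G (m - 1)))) g) '' Dic))
    (hreduction : ∀ m : ℕ, 1 ≤ m →
      E (G m) ≤ sInf ((fun lam => E (G (m - 1) + lam • φ m)) '' Set.Ici (0 : ℝ)))
    (hbio : ∀ m : ℕ, 1 ≤ m → E' (G m) (G m) = 0) :
    Filter.Tendsto (fun m => E (G m)) Filter.atTop (nhds (sInf (E '' DE))) :=
  stmt_13_general E hE E' hdiff Dic hDnorm hDdense hDsymm DE hDE hbdd θ₀ hθ₀ hρθ₀ t ht ξ hξ hdiv G φ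
    hG0 hφD hgreedy hreduction hbio
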